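/- Let k = 2^t for some odd integer t ≥ 3, let m = √(2k), and let n be the smallest integer such that n ≡ 0 (mod m) and n > 2√(k(2k+1)) + √(2k). Let L be a graph of order n that is a vertex-disjoint union of n/m copies of the complete graph K_m. Then there is a partial k-star decomposition of the complete graph K_n whose leave is L, and there is no k-star decomposition of the join L ∨ K_s for any nonnegative integer s < 6k − n (so this partial decomposition cannot be embedded in a k-star decomposition of K_{n+s} for any s < 6k − n). -/

import Mathlib

/-!
Write `n = q * m`. The two conditions on `n` say exactly that `(q - 1)² > 2m² + 2 ≥ (q - 2)²`,
so `m + 2 ≤ q ≤ 2m + 1`.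

The complement of `L` is the complete `q`-partite graph with parts of size `m`; it has
`k q (q - 1)` edges. By Hakimi's criterion (a consequence of Hall's theorem) it splits into
`k`-stars, two of them centred at each of `q (q - m - 1)` vertices and one at every other vertex:
the Hall condition is a Cauchy–Schwarz estimate on the parts met by a vertex set.

Conversely, let `L ∨ K_s`, on `w = n + s` vertices, split into `d` stars. The vertices centring no
star are independent, so `d ≥ w - q`, and counting edges gives `w (w - 1) = m² (d + q (q - 1))`.
Since `m² = 2^(t+1)` is a prime power dividing the product of the coprime numbers `w` and `w - 1`,
and `m² + 1 < w < 3m²`, we get `w ≤ 2m² + 1`; then `m² (w - q) ≤ m² d ≤ 2m² w - m² q (q - 1)`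
gives `(q - 1)² ≤ w + 1 ≤ 2m² + 2`, a contradiction.
-/

/-- The star with centre `c` and leaf set `Lf` is a `k`-star in `G`. -/
def IsStarIn {V : Type*} (G : SimpleGraph V) (k : ℕ) (c : V) (Lf : Finset V) : Prop :=
  Lf.card = k ∧ ∀ v ∈ Lf, G.Adj c v

/-- The edge set of the star with centre `c` and leaf set `Lf`. -/
def starEdges {V : Type*} [DecidableEq V] (c : V) (Lf : Finset V) : Finset (Sym2 V) :=
  Lf.image (fun v => s(c, v))

/-- A partial `k`-star decomposition of `G`: a set of `k`-stars of `G` whose edge sets are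
pairwise disjoint. -/
def IsPartialStarDecompOn {V : Type*} [DecidableEq V] (G : SimpleGraph V) (k : ℕ)
    (D : Finset (V × Finset V)) : Prop :=
  (∀ p ∈ D, IsStarIn G k p.1 p.2) ∧
  (∀ p ∈ D, ∀ q ∈ D, p ≠ q → Disjoint (starEdges p.1 p.2) (starEdges q.1 q.2))

/-- A `k`-star decomposition of `G`: a partial one whose stars' edge sets cover `E(G)`. -/
def IsStarDecompOn {V : Type*} [DecidableEq V] (G : SimpleGraph V) (k : ℕ)
    (D : Finset (V × Finset V)) : Prop :=
  IsPartialStarDecompOn G k D ∧ ∀ e ∈ G.edgeSet, ∃ p ∈ D, e ∈ starEdges p.1 p.2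

/-- The leave of a partial star decomposition `D` of `G`: the graph on `V(G)` consisting of
the edges of `G` lying in no star of `D`. -/
def leaveOf {V : Type*} [DecidableEq V] (G : SimpleGraph V) (D : Finset (V × Finset V)) :
    SimpleGraph V :=
  G.deleteEdges ↑(D.biUnion fun p => starEdges p.1 p.2)

/-- The join `L ∨ K_s` of `L` with a complete graph on `s` new vertices. -/
def joinK {V : Type*} (L : SimpleGraph V) (s : ℕ) : SimpleGraph (V ⊕ Fin s) where
  Adj x y := x ≠ y ∧ ∀ a b, x = Sum.inl a → y = Sum.inl b → L.Adj a b
  symm := by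
    constructor
    rintro x y ⟨hxy, h⟩
    exact ⟨hxy.symm, fun a b ha hb => (h b a hb ha).symm⟩
  loopless := by constructor; rintro x ⟨h, -⟩; exact h rfl

/-- The independence number `α(L)` of a graph `L`. -/
noncomputable def indepNumber {V : Type*} [Fintype V] (L : SimpleGraph V) : ℕ :=
  sSup {m : ℕ | ∃ t : Finset V, t.card = m ∧ ∀ x ∈ t, ∀ y ∈ t, x ≠ y → ¬ L.Adj x y}

/-- Push a star on `Fin n` forward to `Fin N` along the canonical inclusion. -/
def castStar {n N : ℕ} (h : n ≤ N) (p : Fin n × Finset (Fin n)) :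
    Fin N × Finset (Fin N) :=
  (Fin.castLE h p.1, p.2.image (Fin.castLE h))

/-- The partial `k`-star decomposition `A` of `K_n` can be embedded in a `k`-star
decomposition of `K_{n+s}`. -/
def EmbedsIn (k n s : ℕ) (A : Finset (Fin n × Finset (Fin n))) : Prop :=
  ∃ B : Finset (Fin (n + s) × Finset (Fin (n + s))),
    IsStarDecompOn (⊤ : SimpleGraph (Fin (n + s))) k B ∧
    A.image (castStar (Nat.le_add_right n s)) ⊆ B

/-- `Δ_T = |E_T| - k·∑_{x∈T} γ(x)`, where `E_T` is the set of edges of `G` incident with at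
least one vertex of `T`. -/
noncomputable def starDelta {V : Type*} (G : SimpleGraph V) (k : ℕ) (γ : V → ℕ)
    (T : Finset V) : ℤ :=
  ({e ∈ G.edgeSet | ∃ v ∈ T, v ∈ e}.ncard : ℤ) - k * ∑ x ∈ T, γ x

open Finset

section StarDecomposition

variable {V : Type*} [DecidableEq V] {G H : SimpleGraph V} {k : ℕ} {D : Finset (V × Finset V)}

lemma card_starEdges (c : V) (Lf : Finset V) : #(starEdges c Lf) = #Lf :=
  card_image_of_injective _ fun _ _ h => Sym2.congr_right.1 h

lemma IsStarDecompOn.coe_biUnion_starEdges (hD : IsStarDecompOn H k D) :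
    (↑(D.biUnion fun p => starEdges p.1 p.2) : Set (Sym2 V)) = H.edgeSet := by
  refine Set.Subset.antisymm ?_ fun e he => by simpa using hD.2 e he
  intro e he
  obtain ⟨p, hp, he⟩ := mem_biUnion.1 he
  obtain ⟨w, hw, rfl⟩ := mem_image.1 he
  exact (hD.1.1 p hp).2 w hw

lemma IsStarDecompOn.isPartialStarDecompOn (hD : IsStarDecompOn H k D) (hHG : H ≤ G) :
    IsPartialStarDecompOn G k D :=
  ⟨fun p hp => ⟨(hD.1.1 p hp).1, fun w hw => hHG ((hD.1.1 p hp).2 w hw)⟩, hD.1.2⟩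

lemma IsStarDecompOn.leaveOf_eq (hD : IsStarDecompOn H k D) : leaveOf G D = G \ H := by
  rw [leaveOf, hD.coe_biUnion_starEdges, SimpleGraph.deleteEdges_edgeSet]

lemma IsStarDecompOn.card_edgeFinset [Fintype H.edgeSet] (hD : IsStarDecompOn H k D) :
    #H.edgeFinset = k * #D := by
  have hE : H.edgeFinset = D.biUnion fun p => starEdges p.1 p.2 := by
    rw [← coe_inj, SimpleGraph.coe_edgeFinset, hD.coe_biUnion_starEdges]
  rw [hE, card_biUnion fun p hp q hq hpq => hD.1.2 p hp q hq hpq,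
    sum_congr rfl fun p hp => (card_starEdges p.1 p.2).trans (hD.1.1 p hp).1, sum_const,
    smul_eq_mul, mul_comm]

/-- The vertices that are the centre of no star form an independent set. -/
lemma IsStarDecompOn.card_le_card_add [Fintype V] {a : ℕ} (hD : IsStarDecompOn H k D)
    (hα : ∀ s : Finset V, H.IsIndepSet s → #s ≤ a) : Fintype.card V ≤ #D + a := by
  set centres := D.image Prod.fst
  have hindep : H.IsIndepSet ↑(univ \ centres) := by
    intro x hx y hy _ hxy
    obtain ⟨p, hp, he⟩ := hD.2 s(x, y) hxy
    obtain ⟨w, -, hw⟩ := mem_image.1 he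
    have hc : p.1 = x ∨ p.1 = y := by
      rcases Sym2.eq_iff.1 hw with ⟨h, -⟩ | ⟨h, -⟩ <;> simp [h]
    have hpc : p.1 ∈ centres := mem_image_of_mem _ hp
    rcases hc with h | h
    · exact (mem_sdiff.1 hx).2 (h ▸ hpc)
    · exact (mem_sdiff.1 hy).2 (h ▸ hpc)
  have h1 := hα _ hindep
  have h2 : #centres ≤ #D := card_image_le
  rw [card_sdiff_of_subset (subset_univ _), card_univ] at h1
  omega

end StarDecomposition

section Hall

variable {V : Type*} [DecidableEq V]

lemma two_mul_card_le_sum_card_adj (H : SimpleGraph V) [DecidableRel H.Adj] {S : Finset (Sym2 V)}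
    {T : Finset V} (hSH : ∀ e ∈ S, e ∈ H.edgeSet) (hST : ∀ e ∈ S, ∀ v ∈ e, v ∈ T) :
    2 * #S ≤ ∑ v ∈ T, #{w ∈ T | H.Adj v w} := by
  have hends : ∀ e ∈ S, #{v ∈ T | v ∈ e} = 2 := by
    intro e he
    induction e using Sym2.ind with
    | _ x y =>
      have hxy : x ≠ y := (hSH _ he).ne
      have hT : {v ∈ T | v ∈ s(x, y)} = {x, y} := by
        ext v
        simp only [mem_filter, Sym2.mem_iff, mem_insert, mem_singleton]
        constructor
        · exact fun h => h.2
        · rintro (rfl | rfl) <;> simp [hST _ he]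
      rw [hT, card_pair hxy]
  calc 2 * #S = ∑ e ∈ S, #{v ∈ T | v ∈ e} := by
        rw [sum_congr rfl hends, sum_const, smul_eq_mul, mul_comm]
    _ = ∑ v ∈ T, #{e ∈ S | v ∈ e} :=
        sum_card_bipartiteAbove_eq_sum_card_bipartiteBelow (r := fun e v => v ∈ e)
    _ ≤ ∑ v ∈ T, #{w ∈ T | H.Adj v w} := by
        refine sum_le_sum fun v _ => card_le_card_of_surjOn (fun w => s(v, w)) ?_
        intro e he
        obtain ⟨heS, hve⟩ := mem_filter.1 he
        obtain ⟨w, rfl⟩ := Sym2.mem_iff_exists.1 hve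
        exact ⟨w, mem_filter.2 ⟨hST _ heS w (Sym2.mem_mk_right v w), hSH _ heS⟩, rfl⟩

/-- The slot `(v, j, r)` is position `r` of the `j`-th star centred at `v`. -/
def starSlots (c : V → ℕ) (k : ℕ) (v : V) : Finset (V × ℕ × ℕ) :=
  {v} ×ˢ (range (c v) ×ˢ range k)

lemma card_biUnion_starSlots (c : V → ℕ) (k : ℕ) (T : Finset V) :
    #(T.biUnion (starSlots c k)) = k * ∑ v ∈ T, c v := by
  rw [card_biUnion, mul_sum]
  · exact sum_congr rfl fun v _ => by simp [starSlots, mul_comm]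
  · intro v _ w _ hvw
    simp only [starSlots, Function.onFun, disjoint_left, mem_product, mem_singleton]
    exact fun x hv hw => hvw (hv.1 ▸ hw.1)

variable [Fintype V]

/-- Hall's theorem assigns every edge its own slot at one of its ends; as there are as many slots
as edges, every slot is used. -/
lemma exists_bijective_starSlots (H : SimpleGraph V) [DecidableRel H.Adj] (k : ℕ) (c : V → ℕ)
    (hall : ∀ T : Finset V, ∑ v ∈ T, #{w ∈ T | H.Adj v w} ≤ 2 * k * ∑ v ∈ T, c v)
    (htot : #H.edgeFinset = k * ∑ v, c v) :
    ∃ f : H.edgeSet → V × ℕ × ℕ, Function.Injective f ∧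
      (∀ e : H.edgeSet, (f e).1 ∈ (e : Sym2 V) ∧ f e ∈ starSlots c k (f e).1) ∧
      ∀ v, ∀ x ∈ starSlots c k v, ∃ e, f e = x := by
  let slotsAt (e : H.edgeSet) := (univ.filter fun v => v ∈ (e : Sym2 V)).biUnion (starSlots c k)
  have hHall : ∀ s : Finset H.edgeSet, #s ≤ #(s.biUnion slotsAt) := by
    intro s
    set T := s.biUnion fun e => (univ.filter fun v => v ∈ (e : Sym2 V))
    have hcover : 2 * #s ≤ ∑ v ∈ T, #{w ∈ T | H.Adj v w} := by
      rw [← card_map (Function.Embedding.subtype _)]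
      refine two_mul_card_le_sum_card_adj H (fun e he => ?_) fun e he v hv => ?_
      · obtain ⟨e, -, rfl⟩ := mem_map.1 he
        exact e.2
      · obtain ⟨e, he', rfl⟩ := mem_map.1 he
        exact mem_biUnion.2 ⟨e, he', mem_filter.2 ⟨mem_univ _, hv⟩⟩
    have hslots : s.biUnion slotsAt = T.biUnion (starSlots c k) := biUnion_biUnion _ _ _ |>.symm
    have := hall T
    rw [hslots, card_biUnion_starSlots]
    nlinarith
  obtain ⟨f, hf, hmem⟩ := (all_card_le_biUnion_card_iff_exists_injective slotsAt).1 hHall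
  have hmem' : ∀ e : H.edgeSet, (f e).1 ∈ (e : Sym2 V) ∧ f e ∈ starSlots c k (f e).1 := by
    intro e
    obtain ⟨v, hv, hfv⟩ := mem_biUnion.1 (hmem e)
    have : (f e).1 = v := (mem_singleton.1 (mem_product.1 hfv).1)
    exact ⟨this ▸ (mem_filter.1 hv).2, this ▸ hfv⟩
  have himage : univ.image f = univ.biUnion (starSlots c k) := by
    refine eq_of_subset_of_card_le (fun x hx => ?_) ?_
    · obtain ⟨e, -, rfl⟩ := mem_image.1 hx
      exact mem_biUnion.2 ⟨_, mem_univ _, (hmem' e).2⟩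
    · rw [card_biUnion_starSlots, card_image_of_injective _ hf, card_univ, ← htot,
        SimpleGraph.edgeFinset_card]
  refine ⟨f, hf, hmem', fun v x hx => ?_⟩
  obtain ⟨e, -, he⟩ := mem_image.1 (himage ▸ mem_biUnion.2 ⟨v, mem_univ v, hx⟩)
  exact ⟨e, he⟩

/-- **Hakimi's criterion**: `hall` says that every vertex set `T` spans at most
`k * ∑ v ∈ T, c v` edges. -/
theorem exists_isStarDecompOn_of_forall_sum_le (H : SimpleGraph V) [DecidableRel H.Adj] (k : ℕ)
    (c : V → ℕ)
    (hall : ∀ T : Finset V, ∑ v ∈ T, #{w ∈ T | H.Adj v w} ≤ 2 * k * ∑ v ∈ T, c v)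
    (htot : #H.edgeFinset = k * ∑ v, c v) : ∃ D, IsStarDecompOn H k D := by
  obtain ⟨f, hf, hslot, hsurj⟩ := exists_bijective_starSlots H k c hall htot
  let leaves (v : V) (j : ℕ) : Finset V :=
    {w | ∃ h : H.Adj v w, (f ⟨s(v, w), h⟩).1 = v ∧ (f ⟨s(v, w), h⟩).2.1 = j}
  have hadj {v j w} (hw : w ∈ leaves v j) : H.Adj v w := (mem_filter.1 hw).2.fst
  have mem_starEdges_leaves {v j e} : e ∈ starEdges v (leaves v j) ↔
      ∃ h : e ∈ H.edgeSet, (f ⟨e, h⟩).1 = v ∧ (f ⟨e, h⟩).2.1 = j := by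
    constructor
    · intro he
      obtain ⟨w, hw, rfl⟩ := mem_image.1 he
      exact (mem_filter.1 hw).2
    · rintro ⟨he, hv, hj⟩
      obtain ⟨w, rfl⟩ := Sym2.mem_iff_exists.1 (hv ▸ (hslot ⟨e, he⟩).1)
      exact mem_image.2 ⟨w, mem_filter.2 ⟨mem_univ w, he, hv, hj⟩, rfl⟩
  have card_leaves {v j} (hj : j < c v) : #(leaves v j) = k := by
    rw [← card_range k]
    refine card_bij (fun w hw => (f ⟨s(v, w), hadj hw⟩).2.2) (fun w hw => ?_) ?_ ?_
    · have := (hslot ⟨s(v, w), hadj hw⟩).2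
      simp only [starSlots, mem_product] at this
      exact this.2.2
    · intro w hw w' hw' hr
      have hff : f ⟨s(v, w), hadj hw⟩ = f ⟨s(v, w'), hadj hw'⟩ :=
        Prod.ext (((mem_filter.1 hw).2.snd.1).trans (mem_filter.1 hw').2.snd.1.symm)
          (Prod.ext (((mem_filter.1 hw).2.snd.2).trans (mem_filter.1 hw').2.snd.2.symm) hr)
      exact Sym2.congr_right.1 (congrArg Subtype.val (hf hff))
    · intro r hr
      obtain ⟨⟨e, he⟩, hfe⟩ := hsurj v (v, j, r) (by simp [starSlots, hj, mem_range.1 hr])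
      have hstar : e ∈ starEdges v (leaves v j) := mem_starEdges_leaves.2 ⟨he, by simp [hfe]⟩
      obtain ⟨w, hw, rfl⟩ := mem_image.1 hstar
      exact ⟨w, hw, by simp [hfe]⟩
  let D := univ.biUnion fun v => (range (c v)).image fun j => (v, leaves v j)
  have mem_D {p} : p ∈ D ↔ ∃ v, ∃ j < c v, (v, leaves v j) = p := by simp [D]
  refine ⟨D, ⟨fun p hp => ?_, fun p hp p' hp' hne => ?_⟩, fun e he => ?_⟩
  · obtain ⟨v, j, hj, rfl⟩ := mem_D.1 hp
    exact ⟨card_leaves hj, fun w hw => hadj hw⟩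
  · obtain ⟨v, j, -, rfl⟩ := mem_D.1 hp
    obtain ⟨v', j', -, rfl⟩ := mem_D.1 hp'
    refine disjoint_left.2 fun e he he' => hne ?_
    obtain ⟨h, hv, hj⟩ := mem_starEdges_leaves.1 he
    obtain ⟨h', hv', hj'⟩ := mem_starEdges_leaves.1 he'
    dsimp only at hv hv'
    rw [← hv, ← hj, hv', hj']
  · have hj := (hslot ⟨e, he⟩).2
    simp only [starSlots, mem_product, mem_range] at hj
    exact ⟨_, mem_D.2 ⟨_, _, hj.2.1, rfl⟩, mem_starEdges_leaves.2 ⟨he, rfl, rfl⟩⟩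

end Hall

section Parts
variable {V ι : Type*} [Fintype ι] [DecidableEq ι]

lemma sum_card_ne_add_sum_sq (b : V → ι) (T : Finset V) :
    ∑ v ∈ T, #{w ∈ T | b v ≠ b w} + ∑ i, #{v ∈ T | b v = i} ^ 2 = #T ^ 2 := by
  have hsame : ∑ v ∈ T, #{w ∈ T | b w = b v} = ∑ i, #{v ∈ T | b v = i} ^ 2 := by
    rw [← sum_fiberwise' T b fun i => #{w ∈ T | b w = i}]
    simp [sq]
  rw [← hsame, ← sum_add_distrib, sq, ← smul_eq_mul, ← sum_const]
  refine sum_congr rfl fun v _ => ?_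
  rw [add_comm]
  simpa only [eq_comm, ne_eq] using card_filter_add_card_filter_not (s := T) (b · = b v)

/-- Cauchy–Schwarz: at most a `1 - 1 / card ι` fraction of the ordered pairs of `T` lie in
different parts. -/
lemma card_mul_sum_card_ne_add_sq_le (b : V → ι) (T : Finset V) :
    Fintype.card ι * ∑ v ∈ T, #{w ∈ T | b v ≠ b w} + #T ^ 2 ≤ Fintype.card ι * #T ^ 2 := by
  have hCS := sq_sum_le_card_mul_sum_sq (s := univ) (f := fun i => #{v ∈ T | b v = i})
  rw [← card_eq_sum_card_fiberwise fun v _ => mem_univ (b v), card_univ] at hCS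
  have := sum_card_ne_add_sum_sq b T
  nlinarith

lemma card_eq_mul_of_card_fiber [Fintype V] {b : V → ι} {m : ℕ} (hb : ∀ i, #{v | b v = i} = m) :
    Fintype.card V = Fintype.card ι * m := by
  rw [← card_univ, card_eq_sum_card_fiberwise fun v _ => mem_univ (b v)]
  simp [hb]

end Parts

lemma sq_mul_le_of_le_add {m ρ X Y : ℤ} (hρ : 0 ≤ ρ) (hρm : ρ ≤ m) (hX : 0 ≤ X) (hY : 0 ≤ Y)
    (hXq : X ≤ (m + 1 + ρ) * m) (hXY : X ≤ Y + (m + 1 + ρ) * (m - ρ)) :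
    (m + ρ) * X ^ 2 ≤ (m + 1 + ρ) * m ^ 2 * (X + Y) := by
  have hq : 0 ≤ (m + 1 + ρ) * m ^ 2 := mul_nonneg (by linarith) (sq_nonneg m)
  rcases le_total X ((m + 1 + ρ) * (m - ρ)) with h | h
  · have h1 := mul_le_mul_of_nonneg_left h (mul_nonneg (by linarith : 0 ≤ m + ρ) hX)
    have h2 : 0 ≤ X * (m + 1 + ρ) * ρ ^ 2 :=
      mul_nonneg (mul_nonneg hX (by linarith)) (sq_nonneg ρ)
    nlinarith [mul_nonneg hq hY]
  · -- the convex left side lies below its chord over `(m + 1 + ρ)(m - ρ) ≤ X ≤ (m + 1 + ρ) m`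
    have h1 : 0 ≤ (m + ρ) * (X - (m + 1 + ρ) * (m - ρ)) * ((m + 1 + ρ) * m - X) := by
      apply mul_nonneg (mul_nonneg _ _) _ <;> linarith
    have h2 : 0 ≤ (m + 1 + ρ) * ρ * (m - ρ) * ((m + 1 + ρ) * m - X) := by
      apply mul_nonneg (mul_nonneg (mul_nonneg _ _) _) _ <;> linarith
    nlinarith [mul_le_mul_of_nonneg_left (by linarith : X - (m + 1 + ρ) * (m - ρ) ≤ Y) hq]

section Multipartite
variable {V : Type*} [Fintype V] [DecidableEq V]

lemma sum_card_ne_le_of_card_fiber {m ρ : ℕ} {b : V → Fin (m + 1 + ρ)}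
    (hb : ∀ i, #{v | b v = i} = m) (hρ : ρ ≤ m) {R : Finset V} (hR : #R = (m + 1 + ρ) * ρ)
    (T : Finset V) : ∑ v ∈ T, #{w ∈ T | b v ≠ b w} ≤ m * m * (#T + #{v ∈ T | v ∈ R}) := by
  have hV : Fintype.card V = (m + 1 + ρ) * m := by
    rw [card_eq_mul_of_card_fiber hb, Fintype.card_fin]
  have hturan := card_mul_sum_card_ne_add_sq_le b T
  rw [Fintype.card_fin] at hturan
  have hXq : #T ≤ (m + 1 + ρ) * m := hV ▸ card_le_univ T
  have hXY : #T ≤ #{v ∈ T | v ∈ R} + (m + 1 + ρ) * (m - ρ) := by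
    have hout : #{v ∈ T | v ∉ R} ≤ #(univ \ R) :=
      card_le_card fun v hv => mem_sdiff.2 ⟨mem_univ v, (mem_filter.1 hv).2⟩
    rw [card_sdiff_of_subset (subset_univ R), card_univ, hV, hR] at hout
    have := card_filter_add_card_filter_not (s := T) (· ∈ R)
    have : (m + 1 + ρ) * m - (m + 1 + ρ) * ρ = (m + 1 + ρ) * (m - ρ) := (Nat.mul_sub _ _ _).symm
    omega
  zify [hρ] at hXq hXY
  have hkey := sq_mul_le_of_le_add (by positivity) (by omega) (by positivity) (by positivity)
    hXq hXY
  zify at hturan ⊢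
  nlinarith

theorem exists_isStarDecompOn_of_adj_iff_ne {q m k : ℕ} (H : SimpleGraph V) [DecidableRel H.Adj]
    (b : V → Fin q) (hH : ∀ v w, H.Adj v w ↔ b v ≠ b w) (hb : ∀ i, #{v | b v = i} = m)
    (hmk : m * m = 2 * k) (hq₁ : m + 1 ≤ q) (hq₂ : q ≤ 2 * m + 1) :
    ∃ D, IsStarDecompOn H k D := by
  obtain ⟨ρ, rfl⟩ : ∃ ρ, q = m + 1 + ρ := ⟨q - (m + 1), by omega⟩
  have hV : Fintype.card V = (m + 1 + ρ) * m := by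
    rw [card_eq_mul_of_card_fiber hb, Fintype.card_fin]
  obtain ⟨R, -, hR⟩ := exists_subset_card_eq (s := (univ : Finset V)) (n := (m + 1 + ρ) * ρ)
    (by rw [card_univ, hV]; gcongr; omega)
  have hsumc (T : Finset V) :
      ∑ v ∈ T, (if v ∈ R then 2 else 1) = #T + #{v ∈ T | v ∈ R} := by
    rw [sum_ite, sum_const, sum_const, smul_eq_mul, smul_eq_mul,
      ← card_filter_add_card_filter_not (s := T) (· ∈ R)]
    ring
  have hadj (T : Finset V) (v : V) : #{w ∈ T | H.Adj v w} = #{w ∈ T | b v ≠ b w} := by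
    simp only [hH]
  refine exists_isStarDecompOn_of_forall_sum_le H k (fun v => if v ∈ R then 2 else 1)
    (fun T => ?_) ?_
  · simpa only [hadj, hsumc, ← hmk] using sum_card_ne_le_of_card_fiber hb (by omega) hR T
  · have hdeg := (SimpleGraph.sum_degrees_eq_twice_card_edges H).symm
    simp_rw [← SimpleGraph.card_neighborFinset_eq_degree, SimpleGraph.neighborFinset_eq_filter,
      hadj univ] at hdeg
    have hparts := sum_card_ne_add_sum_sq b univ
    simp only [hb, sum_const, card_univ, Fintype.card_fin, smul_eq_mul, hV] at hparts
    rw [hsumc, card_univ, hV, filter_univ_mem, hR]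
    nlinarith

end Multipartite

section Join
variable {V : Type*} {L : SimpleGraph V} {s : ℕ}

@[simp]
lemma joinK_adj_inl_inl {a b : V} : (joinK L s).Adj (.inl a) (.inl b) ↔ L.Adj a b := by
  simp only [joinK, ne_eq, Sum.inl.injEq]
  exact ⟨fun h => h.2 a b rfl rfl, fun h => ⟨h.ne, by rintro _ _ rfl rfl; exact h⟩⟩

@[simp]
lemma joinK_adj_inr {c : Fin s} {y : V ⊕ Fin s} : (joinK L s).Adj (.inr c) y ↔ y ≠ .inr c := by
  simp [joinK, ne_comm]

@[simp]
lemma joinK_adj_inl_inr {a : V} {c : Fin s} : (joinK L s).Adj (.inl a) (.inr c) :=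
  (joinK_adj_inr.2 Sum.inl_ne_inr).symm

lemma card_le_of_isIndepSet_joinK {a : ℕ} (ha : 1 ≤ a)
    (hL : ∀ t : Finset V, L.IsIndepSet ↑t → #t ≤ a) (t : Finset (V ⊕ Fin s))
    (ht : (joinK L s).IsIndepSet ↑t) : #t ≤ a := by
  by_cases hc : ∃ c, .inr c ∈ t
  · obtain ⟨c, hc⟩ := hc
    have : t ⊆ {.inr c} := fun y hy => mem_singleton.2 <| by
      by_contra hne
      exact ht hc hy (Ne.symm hne) (joinK_adj_inr.2 hne)
    exact (card_le_card this).trans (by simpa using ha)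
  · simp only [not_exists] at hc
    have hsub : t ⊆ (t.preimage Sum.inl Sum.inl_injective.injOn).map .inl := by
      intro y hy
      cases y with
      | inl v => exact mem_map_of_mem _ (mem_preimage.2 hy)
      | inr c => exact absurd hy (hc c)
    refine (card_le_card hsub).trans ?_
    rw [card_map]
    exact hL _ fun v hv w hw hvw hadj =>
      ht (mem_preimage.1 hv) (mem_preimage.1 hw) (by simpa using hvw) (joinK_adj_inl_inl.2 hadj)

variable [Fintype V] [DecidableEq V] [DecidableRel L.Adj] [DecidableRel (joinK L s).Adj]

lemma two_mul_card_edgeFinset_joinK :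
    2 * #(joinK L s).edgeFinset =
      2 * #L.edgeFinset + Fintype.card V * s + s * (Fintype.card V + s - 1) := by
  have hinl (a : V) : (joinK L s).degree (.inl a) = L.degree a + s := by
    rw [← SimpleGraph.card_neighborFinset_eq_degree, show (joinK L s).neighborFinset (.inl a) =
      (L.neighborFinset a).disjSum univ by ext y; cases y <;> simp, card_disjSum, card_univ,
      Fintype.card_fin, SimpleGraph.card_neighborFinset_eq_degree]
  have hinr (c : Fin s) : (joinK L s).degree (.inr c) = Fintype.card V + s - 1 := by
    rw [← SimpleGraph.card_neighborFinset_eq_degree, show (joinK L s).neighborFinset (.inr c) =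
      univ.erase (.inr c) by ext; simp, card_erase_of_mem (mem_univ _), card_univ,
      Fintype.card_sum, Fintype.card_fin]
  rw [← SimpleGraph.sum_degrees_eq_twice_card_edges, ← SimpleGraph.sum_degrees_eq_twice_card_edges,
    Fintype.sum_sum_type]
  simp only [hinl, hinr, sum_add_distrib, sum_const, card_univ, Fintype.card_fin, smul_eq_mul]

end Join

section Cliques
variable {V : Type*} {q m : ℕ} {L : SimpleGraph V} {b : V → Fin q}

lemma degree_eq_of_adj_iff [Fintype V] [DecidableEq V] [DecidableRel L.Adj]
    (hL : ∀ x y, L.Adj x y ↔ x ≠ y ∧ b x = b y) (hb : ∀ i, #{v | b v = i} = m) (v : V) :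
    L.degree v = m - 1 := by
  rw [← SimpleGraph.card_neighborFinset_eq_degree,
    show L.neighborFinset v = ({w | b w = b v} : Finset V).erase v by ext w; simp [hL, eq_comm],
    card_erase_of_mem (by simp), hb]

lemma card_le_of_isIndepSet_of_adj_iff (hL : ∀ x y, L.Adj x y ↔ x ≠ y ∧ b x = b y)
    (t : Finset V) (ht : L.IsIndepSet ↑t) : #t ≤ q :=
  (card_le_card_of_injOn b (fun _ _ => mem_univ _) fun x hx y hy hxy =>
    by_contra fun hne => ht hx hy hne ((hL x y).2 ⟨hne, hxy⟩)).trans (by simp)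

end Cliques

lemma le_two_mul_add_one_of_dvd_mul_sub_one {a w : ℕ} (ha : IsPrimePow a) (hdvd : a ∣ w * (w - 1))
    (h₁ : a + 1 < w) (h₂ : w < 3 * a) : w ≤ 2 * a + 1 := by
  have hcop : Nat.Coprime w (w - 1) :=
    (Nat.coprime_self_sub_right (by omega)).2 (Nat.coprime_one_right _)
  have eq_two_mul {x : ℕ} (hx : a ∣ x) (h₁ : a < x) (h₂ : x < 3 * a) : x = 2 * a := by
    obtain ⟨c, rfl⟩ := hx
    have : 1 < c := by nlinarith
    have : c < 3 := by nlinarith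
    obtain rfl : c = 2 := by omega
    ring
  rcases (hcop.isPrimePow_dvd_mul ha).1 hdvd with h | h
  · have := eq_two_mul h (by omega) h₂
    omega
  · have := eq_two_mul h (by omega) (by omega)
    omega

section NoDecomposition
variable {V : Type*} [Fintype V] [DecidableEq V] {q m k s : ℕ} {L : SimpleGraph V}
  {b : V → Fin q}

lemma IsStarDecompOn.mul_sub_one_eq_of_adj_iff {D : Finset ((V ⊕ Fin s) × Finset (V ⊕ Fin s))}
    (hD : IsStarDecompOn (joinK L s) k D) (hL : ∀ x y, L.Adj x y ↔ x ≠ y ∧ b x = b y)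
    (hb : ∀ i, #{v | b v = i} = m) (hmk : m * m = 2 * k) (hm : 0 < m) (hq : 0 < q) :
    (q * m + s) * (q * m + s - 1) = m * m * (#D + q * (q - 1)) := by
  classical
  have hV : Fintype.card V = q * m := by rw [card_eq_mul_of_card_fiber hb, Fintype.card_fin]
  have hstars : 2 * #(joinK L s).edgeFinset = m * m * #D := by
    rw [hD.card_edgeFinset, hmk]
    ring
  have hL2 : 2 * #L.edgeFinset = q * m * (m - 1) := by
    rw [← SimpleGraph.sum_degrees_eq_twice_card_edges]
    simp [degree_eq_of_adj_iff hL hb, hV]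
  have hedges := two_mul_card_edgeFinset_joinK (L := L) (s := s)
  rw [hV, hstars, hL2] at hedges
  have : 1 ≤ q * m := Nat.mul_pos hq hm
  zify [hm, hq, show 1 ≤ q * m + s by omega] at hedges ⊢
  linear_combination -hedges

theorem not_exists_isStarDecompOn_joinK (hL : ∀ x y, L.Adj x y ↔ x ≠ y ∧ b x = b y)
    (hb : ∀ i, #{v | b v = i} = m) (hmk : m * m = 2 * k) (hpow : IsPrimePow (m * m))
    (hq : 2 * (m * m) + 2 < (q - 1) ^ 2) (hs : Fintype.card V + s < 3 * (m * m)) :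
    ¬ ∃ D, IsStarDecompOn (joinK L s) k D := by
  classical
  rintro ⟨D, hD⟩
  have hV : Fintype.card V = q * m := by rw [card_eq_mul_of_card_fiber hb, Fintype.card_fin]
  have hm : 1 < m * m := hpow.one_lt
  have hm1 : 1 ≤ m := by nlinarith
  have hqm : m + 2 ≤ q := by
    have : m < q - 1 := lt_of_pow_lt_pow_left₀ 2 (by omega) (by nlinarith)
    omega
  have hcentres := hD.card_le_card_add
    (card_le_of_isIndepSet_joinK (by omega) (card_le_of_isIndepSet_of_adj_iff hL))
  rw [Fintype.card_sum, Fintype.card_fin, hV] at hcentres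
  rw [hV] at hs
  have hww := hD.mul_sub_one_eq_of_adj_iff hL hb hmk hm1 (by omega)
  have hwle := le_two_mul_add_one_of_dvd_mul_sub_one hpow ⟨_, hww⟩ (by nlinarith) hs
  zify [hm1, show 1 ≤ q by omega, show 1 ≤ q * m + s by nlinarith] at hww hcentres hwle hq
  have hmm : (0 : ℤ) < m * m := by positivity
  have hcount : (m * m : ℤ) * ((q - 1) ^ 2 - 1 - (q * m + s)) ≤ 0 := by
    nlinarith [mul_le_mul_of_nonneg_left hcentres hmm.le,
      mul_le_mul_of_nonneg_left (by linarith : (q * m + s : ℤ) - 1 ≤ 2 * (m * m))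
        (by positivity : (0 : ℤ) ≤ q * m + s)]
  nlinarith [nonpos_of_mul_nonpos_right hcount hmm]

end NoDecomposition

lemma threshold_lt_iff {m k : ℕ} (hmk : m * m = 2 * k) (hm : 0 < m) (j : ℕ) :
    ((j * m : ℕ) : ℝ) > 2 * Real.sqrt (k * (2 * k + 1)) + Real.sqrt (2 * k) ↔
      2 * (m * m) + 2 < (j - 1) ^ 2 := by
  have hk : (k : ℝ) = m ^ 2 / 2 := by
    rw [eq_div_iff two_ne_zero, sq]
    exact_mod_cast (hmk.trans (mul_comm 2 k)).symm
  have hθ : 2 * Real.sqrt (k * (2 * k + 1)) + Real.sqrt (2 * k) =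
      (Real.sqrt (2 * (m * m) + 2) + 1) * m := by
    rw [show (k : ℝ) * (2 * k + 1) = (m / 2) ^ 2 * (2 * (m * m) + 2) by rw [hk]; ring,
      show (2 : ℝ) * k = m ^ 2 by rw [hk]; ring, Real.sqrt_mul' _ (by positivity),
      Real.sqrt_sq (by positivity), Real.sqrt_sq (by positivity)]
    ring
  rw [gt_iff_lt, hθ, Nat.cast_mul, mul_lt_mul_iff_of_pos_right (by exact_mod_cast hm)]
  rcases Nat.eq_zero_or_pos j with rfl | hj
  · exact iff_of_false (by push_cast; linarith [Real.sqrt_nonneg (2 * ((m : ℝ) * m) + 2)])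
      (by simp)
  · rw [← lt_sub_iff_add_lt, Real.sqrt_lt (by positivity) (sub_nonneg.2 (by exact_mod_cast hj)),
      ← Nat.cast_one (R := ℝ), ← Nat.cast_sub hj]
    exact_mod_cast Iff.rfl

lemma card_filter_divNat_eq (q m : ℕ) (i : Fin q) : #{v : Fin (q * m) | v.divNat = i} = m := by
  have hdiv (x : Fin q × Fin m) : (finProdFinEquiv x).divNat = x.1 := by
    simpa only [finProdFinEquiv_symm_apply] using
      congrArg Prod.fst (finProdFinEquiv.symm_apply_apply x)
  rw [← card_map finProdFinEquiv.symm.toEmbedding, map_filter, map_univ_equiv]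
  simp only [Function.comp_def, Equiv.symm_symm, hdiv]
  rw [show ({x | x.1 = i} : Finset (Fin q × Fin m)) = {i} ×ˢ univ by ext ⟨a, r⟩; simp [eq_comm]]
  simp

theorem stmt16_general (t k m n : ℕ) (hkt : k = 2 ^ t)
    (hm : m * m = 2 * k)
    (hn : m ∣ n ∧ (n : ℝ) > 2 * Real.sqrt (k * (2 * k + 1)) + Real.sqrt (2 * k))
    (hmin : ∀ n' : ℕ, n' < n →
      ¬ (m ∣ n' ∧ (n' : ℝ) > 2 * Real.sqrt (k * (2 * k + 1)) + Real.sqrt (2 * k)))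
    (L : SimpleGraph (Fin n))
    (hL : ∀ x y : Fin n, L.Adj x y ↔ x ≠ y ∧ x.val / m = y.val / m) :
    (∃ D, IsPartialStarDecompOn (⊤ : SimpleGraph (Fin n)) k D ∧
        leaveOf (⊤ : SimpleGraph (Fin n)) D = L) ∧
    ∀ s : ℕ, n + s < 6 * k → ¬ ∃ D, IsStarDecompOn (joinK L s) k D := by
  classical
  obtain ⟨q, rfl⟩ := exists_eq_mul_left_of_dvd hn.1
  have hm2 : 2 ≤ m * m := by rw [hm, hkt]; have := Nat.one_le_two_pow (n := t); omega
  have hm0 : 0 < m := Nat.pos_of_mul_pos_left (by omega : 0 < m * m)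
  have hpow : IsPrimePow (m * m) := by
    rw [hm, hkt, ← pow_succ']
    exact Nat.prime_two.isPrimePow.pow t.succ_ne_zero
  have hq := (threshold_lt_iff hm hm0 q).1 hn.2
  have hqlo : m < q - 1 := lt_of_pow_lt_pow_left₀ 2 (by omega) (by nlinarith)
  have hq' : (q - 1 - 1) ^ 2 ≤ 2 * (m * m) + 2 := not_lt.1 fun h =>
    hmin ((q - 1) * m) ((Nat.mul_lt_mul_right hm0).2 (by omega))
      ⟨dvd_mul_left m _, (threshold_lt_iff hm hm0 _).2 h⟩
  have hqhi : q - 1 - 1 < 2 * m := lt_of_pow_lt_pow_left₀ 2 (by omega) (by nlinarith)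
  have hLb (x y : Fin (q * m)) : L.Adj x y ↔ x ≠ y ∧ x.divNat = y.divNat := by
    simp [hL, Fin.ext_iff, Fin.coe_divNat]
  refine ⟨?_, fun s hs => not_exists_isStarDecompOn_joinK hLb (card_filter_divNat_eq q m) hm hpow
    hq (by rw [Fintype.card_fin]; omega)⟩
  obtain ⟨D, hD⟩ := exists_isStarDecompOn_of_adj_iff_ne Lᶜ Fin.divNat
    (fun v w => by rw [SimpleGraph.compl_adj, hLb]; grind) (card_filter_divNat_eq q m) hm
    (by omega) (by omega)
  exact ⟨D, hD.isPartialStarDecompOn le_top, by rw [hD.leaveOf_eq, sdiff_compl, top_inf_eq]⟩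

/-- for `k = 2^t` with `t ≥ 3` odd, `m = √(2k)`, and `n` the smallest integer
with `m ∣ n` and `n > 2√(k(2k+1)) + √(2k)`, the disjoint union `L` of `n/m` copies of `K_m`
is the leave of a partial `k`-star decomposition of `K_n`, yet `L ∨ K_s` has no `k`-star
decomposition for any `s < 6k - n`. -/
theorem stmt16 (t k m n : ℕ) (ht : Odd t) (ht3 : 3 ≤ t) (hkt : k = 2 ^ t)
    (hm : m * m = 2 * k)
    (hn : m ∣ n ∧ (n : ℝ) > 2 * Real.sqrt (k * (2 * k + 1)) + Real.sqrt (2 * k))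
    (hmin : ∀ n' : ℕ, n' < n →
      ¬ (m ∣ n' ∧ (n' : ℝ) > 2 * Real.sqrt (k * (2 * k + 1)) + Real.sqrt (2 * k)))
    (L : SimpleGraph (Fin n))
    (hL : ∀ x y : Fin n, L.Adj x y ↔ x ≠ y ∧ x.val / m = y.val / m) :
    (∃ D, IsPartialStarDecompOn (⊤ : SimpleGraph (Fin n)) k D ∧
        leaveOf (⊤ : SimpleGraph (Fin n)) D = L) ∧
    ∀ s : ℕ, n + s < 6 * k → ¬ ∃ D, IsStarDecompOn (joinK L s) k D :=
  stmt16_general t k m n hkt hm hn hmin L hL
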